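/- For all moulds M, N, P : List Ω → k, one has (M × N) ∘ P = (M ∘ P) × (N ∘ P); that is, mould composition distributes over the mould product from the left. (This identity is the comodule-bialgebra compatibility of the incidence bialgebras of the free operad Ω* and the Baez–Dolan construction Ω⊙, i.e. the main theorem specialized to a monoid Ω.) -/

import Mathlib

/-!
Expand both sides over compositions. A term of `((M × N) ∘ P)(w)` is indexed by a composition
`c` of `|w|` and a cut `j` of the word of block norms; cutting `c` after its `j`-th block
splits `w = u ++ v` together with a composition of `u` and one of `v`, which index the terms of
`((M ∘ P) × (N ∘ P))(w)`. This correspondence is bijective, and since splitting `w` along `c`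
is splitting `u` and `v` along the two pieces and concatenating, matching terms agree.
-/

variable {Ω : Type*} [Monoid Ω] {k : Type*} [CommRing k]

/-- The mould product: `(M × N)(w) = ∑_{w = u ++ v} M(u) · N(v)`. -/
def mouldMul (M N : List Ω → k) : List Ω → k := fun w =>
  ∑ i ∈ Finset.range (w.length + 1), M (w.take i) * N (w.drop i)

/-- The mould composition: `(M ∘ N)([]) = M([])` and, for `w` nonempty,
`(M ∘ N)(w) = ∑_{c : Composition |w|} (∏_b N(b)) · M(ν_c(w))`, where the product is
over the blocks `b` of `w` cut according to `c`, and `ν_c(w)` is the list of block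
norms (the products in `Ω` of the entries of each block). -/
def mouldComp (M N : List Ω → k) : List Ω → k := fun w =>
  if w.length = 0 then M [] else
    ∑ c : Composition w.length,
      ((w.splitWrtComposition c).map N).prod *
        M ((w.splitWrtComposition c).map List.prod)

open Finset

namespace Composition

variable {n : ℕ}

def take (c : Composition n) (j : ℕ) : Composition (c.sizeUpTo j) where
  blocks := c.blocks.take j
  blocks_pos h := c.blocks_pos (List.mem_of_mem_take h)
  blocks_sum := rfl

def drop (c : Composition n) (j : ℕ) : Composition (n - c.sizeUpTo j) where
  blocks := c.blocks.drop j
  blocks_pos h := c.blocks_pos (List.mem_of_mem_drop h)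
  blocks_sum := by
    have := c.blocks_sum
    rw [← List.take_append_drop j c.blocks, List.sum_append] at this
    simp only [sizeUpTo]
    omega

theorem sum_blocks_congr {β : Type*} [AddCommMonoid β] {m : ℕ} (h : m = n) (f : List ℕ → β) :
    ∑ c : Composition m, f c.blocks = ∑ c : Composition n, f c.blocks := by
  subst h; rfl

theorem sigma_prod_ext {f g : ℕ → ℕ} {x y : Σ i, Composition (f i) × Composition (g i)}
    (h₀ : x.1 = y.1) (h₁ : x.2.1.blocks = y.2.1.blocks) (h₂ : x.2.2.blocks = y.2.2.blocks) :
    x = y := by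
  obtain ⟨i, a, b⟩ := x
  obtain ⟨j, a', b'⟩ := y
  obtain rfl : i = j := h₀
  rw [Composition.ext (x := a) h₁, Composition.ext (x := b) h₂]

theorem sum_sum_take_drop {β : Type*} [AddCommMonoid β] (g : ℕ → List ℕ → List ℕ → β) :
    ∑ c : Composition n, ∑ j ∈ range (c.length + 1),
        g (c.sizeUpTo j) (c.blocks.take j) (c.blocks.drop j) =
      ∑ i ∈ range (n + 1), ∑ c₁ : Composition i, ∑ c₂ : Composition (n - i),
        g i c₁.blocks c₂.blocks := by
  simp only [← Fintype.sum_prod_type']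
  rw [sum_sigma', sum_sigma']
  refine sum_bij' (fun x _ => ⟨x.1.sizeUpTo x.2, x.1.take x.2, x.1.drop x.2⟩)
    (fun y hy => ⟨(y.2.1.append y.2.2).cast
      (Nat.add_sub_cancel' (mem_range_succ_iff.mp (mem_sigma.mp hy).1)), y.2.1.length⟩)
    ?_ ?_ ?_ ?_ ?_
  · rintro ⟨c, j⟩ -
    simpa using Nat.lt_succ_of_le (c.sizeUpTo_le j)
  · rintro ⟨i, c₁, c₂⟩ -
    simp [length]
  · rintro ⟨c, j⟩ hj
    have hj : j ≤ c.blocks.length := Nat.lt_succ_iff.mp (by simpa using hj)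
    refine Sigma.ext (Composition.ext ?_) (heq_of_eq ?_)
    · simp [take, drop]
    · simp [take, length, hj]
  · rintro ⟨i, c₁, c₂⟩ -
    refine sigma_prod_ext ?_ ?_ ?_ <;> simp [take, drop, sizeUpTo, ← c₁.blocks_length]
  · rintro ⟨c, j⟩ -
    rfl

end Composition

theorem List.splitWrtCompositionAux_append {α : Type*} (l : List α) (ns ms : List ℕ) :
    l.splitWrtCompositionAux (ns ++ ms) =
      (l.take ns.sum).splitWrtCompositionAux ns ++ (l.drop ns.sum).splitWrtCompositionAux ms := by
  induction ns generalizing l with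
  | nil => simp [List.splitWrtCompositionAux]
  | cons n ns ih =>
    simp only [List.cons_append, List.splitWrtCompositionAux_cons, List.sum_cons, ih,
      List.take_take, List.drop_take, List.drop_drop]
    simp

def mouldCompTerm (M P : List Ω → k) (w : List Ω) (ns : List ℕ) : k :=
  ((w.splitWrtCompositionAux ns).map P).prod * M ((w.splitWrtCompositionAux ns).map List.prod)

theorem mouldComp_eq_sum (M P : List Ω → k) (w : List Ω) :
    mouldComp M P w = ∑ c : Composition w.length, mouldCompTerm M P w c.blocks := by
  rw [mouldComp]
  split_ifs with h
  · rw [Fintype.sum_eq_single (Composition.ones 0 |>.cast h.symm) fun c hc =>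
      (hc (Composition.ext ((c.blocks_eq_nil.mpr h).trans rfl))).elim]
    simp [mouldCompTerm, List.splitWrtCompositionAux]
  · rfl

theorem mouldCompTerm_mouldMul (M N P : List Ω → k) (w : List Ω) (ns : List ℕ) :
    mouldCompTerm (mouldMul M N) P w ns = ∑ j ∈ range (ns.length + 1),
      mouldCompTerm M P (w.take (ns.take j).sum) (ns.take j) *
        mouldCompTerm N P (w.drop (ns.take j).sum) (ns.drop j) := by
  rw [mouldCompTerm, mouldMul, List.length_map, List.length_splitWrtCompositionAux, mul_sum]
  refine sum_congr rfl fun j hj => ?_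
  have hj : (ns.take j).length = j := List.length_take_of_le (mem_range_succ_iff.mp hj)
  conv_lhs => rw [← List.take_append_drop j ns, List.splitWrtCompositionAux_append]
  rw [List.map_append, List.map_append, List.prod_append,
    List.take_left' (by rw [List.length_map, List.length_splitWrtCompositionAux, hj]),
    List.drop_left' (by rw [List.length_map, List.length_splitWrtCompositionAux, hj]),
    mouldCompTerm, mouldCompTerm]
  ring

/-- Mould composition distributes over the mould product from the left:
`(M × N) ∘ P = (M ∘ P) × (N ∘ P)`.  This is the comodule-bialgebra compatibility
of the incidence bialgebras of the free operad `Ω*` and the Baez–Dolan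
construction `Ω⊙`. -/
theorem mouldComp_mouldMul_distrib (M N P : List Ω → k) :
    mouldComp (mouldMul M N) P = mouldMul (mouldComp M P) (mouldComp N P) := by
  funext w
  simp only [mouldComp_eq_sum, mouldCompTerm_mouldMul, Composition.blocks_length, mouldMul]
  refine (Composition.sum_sum_take_drop fun i ns ms =>
      mouldCompTerm M P (w.take i) ns * mouldCompTerm N P (w.drop i) ms).trans
    (sum_congr rfl fun i hi => ?_)
  have hi : (w.take i).length = i := List.length_take_of_le (mem_range_succ_iff.mp hi)
  rw [Composition.sum_blocks_congr hi (mouldCompTerm M P (w.take i)),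
    Composition.sum_blocks_congr (List.length_drop ..) (mouldCompTerm N P (w.drop i)),
    sum_mul_sum]
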